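/- arXiv:2512.13105 — 7 statements merged into one kernel-verified Lean document; each statement's English description precedes it below -/
import Mathlib

section
/- For any β-approximate minimum cut S of a connected graph G (i.e., |∂S| ≤ β·λ where λ is the edge-connectivity) and any (1+ε)-approximate tree packing T (a weighted collection of spanning trees with total weight at least τ/(1+ε), where τ is the maximum tree packing value and every edge has load at most 1), there exists a tree T in the packing such that at most ⌊2(1+ε)β⌋ edges of T cross the cut S. -/
open Finset

/-- For any β-approximate minimum cut `cutS` of a connected graph
(edge-connectivity `lam`, maximum tree-packing value `tau`, so `lam/2 ≤ tau` by
Nash-Williams) and any `(1+eps)`-approximate tree packing (weights `w` on spanning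
trees `tree T`, every edge has load at most 1, total weight at least `tau/(1+eps)`),
there exists a tree of positive weight with at most `⌊2(1+eps)β⌋` edges crossing the cut. -/
theorem exists_tree_respecting_approx_mincut
    {ι E : Type*} [Fintype ι] [DecidableEq E]
    (w : ι → ℝ) (tree : ι → Finset E) (cutS : Finset E)
    (lam tau eps beta : ℝ)
    (hw : ∀ T, 0 ≤ w T)
    (hload : ∀ e : E, (∑ T : ι, if e ∈ tree T then w T else 0) ≤ 1)
    (hNW : lam / 2 ≤ tau) (htau : 0 < tau)
    (heps : 0 ≤ eps) (hbeta : 0 ≤ beta)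
    (hval : tau / (1 + eps) ≤ ∑ T : ι, w T)
    (hcut : (cutS.card : ℝ) ≤ beta * lam) :
    ∃ T : ι, 0 < w T ∧ ((tree T ∩ cutS).card : ℝ) ≤ ⌊2 * (1 + eps) * beta⌋₊ := by
  by_contra hcon
  push_neg at hcon
  set B : ℝ := 2 * (1 + eps) * beta with hBdef
  have heps1 : (0:ℝ) < 1 + eps := by linarith
  have hB : 0 ≤ B := by positivity
  set W : ℝ := ∑ T : ι, w T with hWdef
  have hWpos : 0 < W := lt_of_lt_of_le (by positivity) hval
  -- total crossing weight equals sum of loads over the cut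
  have key : ∑ T : ι, w T * ((tree T ∩ cutS).card : ℝ)
      = ∑ e ∈ cutS, ∑ T : ι, (if e ∈ tree T then w T else 0) := by
    rw [Finset.sum_comm]
    refine Finset.sum_congr rfl fun T _ => ?_
    rw [Finset.sum_ite_mem, Finset.sum_const, Finset.inter_comm]
    simp [mul_comm]
  have hsum_le : ∑ T : ι, w T * ((tree T ∩ cutS).card : ℝ) ≤ beta * lam := by
    rw [key]
    calc ∑ e ∈ cutS, ∑ T : ι, (if e ∈ tree T then w T else 0)
        ≤ ∑ e ∈ cutS, (1:ℝ) := Finset.sum_le_sum fun e _ => hload e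
      _ = cutS.card := by simp
      _ ≤ beta * lam := hcut
  -- every positive-weight tree crosses more than B times
  have hgt : ∀ T : ι, 0 < w T → B < ((tree T ∩ cutS).card : ℝ) := by
    intro T hT
    have h := hcon T hT
    have h2 : ⌊B⌋₊ < (tree T ∩ cutS).card := by exact_mod_cast h
    calc B < (⌊B⌋₊ : ℝ) + 1 := Nat.lt_floor_add_one B
      _ ≤ ((tree T ∩ cutS).card : ℝ) := by exact_mod_cast h2
  have hterm : ∀ T ∈ Finset.univ (α := ι), w T * B ≤ w T * ((tree T ∩ cutS).card : ℝ) := by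
    intro T _
    rcases lt_or_eq_of_le (hw T) with hpos | hzero
    · exact mul_le_mul_of_nonneg_left (le_of_lt (hgt T hpos)) (le_of_lt hpos)
    · simp [← hzero]
  -- some tree has positive weight
  obtain ⟨T0, hT0⟩ : ∃ T : ι, 0 < w T := by
    by_contra hall
    push_neg at hall
    have : W ≤ 0 := Finset.sum_nonpos fun T _ => hall T
    linarith
  have hstrict : W * B < ∑ T : ι, w T * ((tree T ∩ cutS).card : ℝ) := by
    rw [hWdef, Finset.sum_mul]
    exact Finset.sum_lt_sum hterm ⟨T0, Finset.mem_univ T0,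
      (mul_lt_mul_iff_right₀ hT0).mpr (hgt T0 hT0)⟩
  -- but W * B ≥ 2 β τ ≥ β λ
  have h1 : 2 * beta * tau ≤ W * B := by
    have : tau / (1 + eps) * B ≤ W * B := mul_le_mul_of_nonneg_right hval hB
    calc 2 * beta * tau = tau / (1 + eps) * B := by
          field_simp [hBdef]; ring
      _ ≤ W * B := this
  have h2 : beta * lam ≤ 2 * beta * tau := by nlinarith
  linarith
end

section
/- Nash-Williams bound used in the tree-packing argument: if a tree packing is (1+ε)-approximate and a tree T is sampled with probability proportional to its weight, then for each edge e the probability that T contains e is at most (1+ε)/τ, and hence the expected number of edges of T crossing a β-approximate mincut is at most 2(1+ε)β. -/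
open Finset

/-- For a `(1+eps)`-approximate tree packing of a graph with mincut `lam`
and maximum tree-packing value `tau` (Nash-Williams: `lam/2 ≤ tau ≤ lam`), sampling a tree
with probability proportional to its weight: (i) each edge is contained in the sampled tree
with probability at most `(1+eps)/tau`, and (ii) the expected number of edges of the sampled
tree crossing a β-approximate mincut `cutS` is at most `2(1+eps)β`. -/
theorem tree_packing_sampling_bounds
    {ι E : Type*} [Fintype ι] [DecidableEq E]
    (w : ι → ℝ) (tree : ι → Finset E) (cutS : Finset E)
    (lam tau eps beta : ℝ)
    (hw : ∀ T, 0 ≤ w T)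
    (hload : ∀ e : E, (∑ T : ι, if e ∈ tree T then w T else 0) ≤ 1)
    (hNW1 : lam / 2 ≤ tau) (hNW2 : tau ≤ lam) (htau : 0 < tau)
    (heps : 0 ≤ eps) (hbeta : 0 ≤ beta)
    (hval : tau / (1 + eps) ≤ ∑ T : ι, w T)
    (hcut : (cutS.card : ℝ) ≤ beta * lam) :
    (∀ e : E,
        (∑ T : ι, if e ∈ tree T then w T else 0) / (∑ T : ι, w T) ≤ (1 + eps) / tau) ∧
    (∑ T : ι, (w T / ∑ T' : ι, w T') * ((tree T ∩ cutS).card : ℝ))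
      ≤ 2 * (1 + eps) * beta := by
  have h1e : (0:ℝ) < 1 + eps := by linarith
  have hW : (0:ℝ) < ∑ T : ι, w T := lt_of_lt_of_le (div_pos htau h1e) hval
  have hinv : 1 / (∑ T : ι, w T) ≤ (1 + eps) / tau := by
    rw [div_le_div_iff₀ hW htau, one_mul]
    calc tau = (tau / (1 + eps)) * (1 + eps) := by field_simp
    _ ≤ (∑ T : ι, w T) * (1 + eps) :=
        mul_le_mul_of_nonneg_right hval (le_of_lt h1e)
    _ = (1 + eps) * ∑ T : ι, w T := mul_comm _ _
  constructor
  · intro e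
    calc (∑ T : ι, if e ∈ tree T then w T else 0) / (∑ T : ι, w T)
        ≤ 1 / (∑ T : ι, w T) := by
          gcongr
          exact hload e
      _ ≤ (1 + eps) / tau := hinv
  · have hswap : ∑ T : ι, w T * ((tree T ∩ cutS).card : ℝ)
        = ∑ e ∈ cutS, (∑ T : ι, if e ∈ tree T then w T else 0) := by
      rw [Finset.sum_comm]
      apply Finset.sum_congr rfl
      intro T _
      have : ((tree T ∩ cutS).card : ℝ) = ∑ e ∈ cutS, (if e ∈ tree T then (1:ℝ) else 0) := by
        simp [Finset.sum_ite_mem, Finset.inter_comm]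
      rw [this, Finset.mul_sum]
      apply Finset.sum_congr rfl
      intro e _
      split <;> simp
    have hnum : ∑ T : ι, w T * ((tree T ∩ cutS).card : ℝ) ≤ (cutS.card : ℝ) := by
      rw [hswap]
      calc ∑ e ∈ cutS, (∑ T : ι, if e ∈ tree T then w T else 0)
          ≤ ∑ e ∈ cutS, (1:ℝ) := Finset.sum_le_sum (fun e _ => hload e)
        _ = (cutS.card : ℝ) := by simp
    have key : ∑ T : ι, (w T / ∑ T' : ι, w T') * ((tree T ∩ cutS).card : ℝ)
        = (∑ T : ι, w T * ((tree T ∩ cutS).card : ℝ)) / (∑ T' : ι, w T') := by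
      rw [Finset.sum_div]
      apply Finset.sum_congr rfl
      intro T _
      ring
    rw [key]
    have hcut2 : (cutS.card : ℝ) ≤ 2 * beta * tau := by
      calc (cutS.card : ℝ) ≤ beta * lam := hcut
        _ ≤ beta * (2 * tau) := by
            apply mul_le_mul_of_nonneg_left _ hbeta
            linarith
        _ = 2 * beta * tau := by ring
    calc (∑ T : ι, w T * ((tree T ∩ cutS).card : ℝ)) / (∑ T' : ι, w T')
        ≤ (cutS.card : ℝ) / (∑ T' : ι, w T') := by
          gcongr
      _ = (cutS.card : ℝ) * (1 / (∑ T' : ι, w T')) := by ring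
      _ ≤ (2 * beta * tau) * ((1 + eps) / tau) := by
          apply mul_le_mul hcut2 hinv (by positivity) (by positivity)
      _ = 2 * (1 + eps) * beta * (tau / tau) := by ring
      _ = 2 * (1 + eps) * beta := by rw [div_self (ne_of_gt htau), mul_one]
end

section
/- Correctness of colored BFS for local cuts: let G be a graph, T a spanning tree of the connected component of a vertex v, and S a vertex set containing v with vol(S) ≤ ν, |∂S| ≤ λ_max, G[S] connected, and such that at most 2β edges of T cross S. Then there exists a red-blue coloring of edges (with all tree edges crossing ∂S red and all tree edges inside G[S] blue) and a green-yellow coloring (with at most 2β−1 non-tree edges connecting the tree components inside S green and all edges of ∂S yellow) such that S is exactly the connected component of v in the subgraph consisting of blue tree edges and green non-tree edges. -/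
open Finset

/-- The simple graph on `V` induced by a set `A` of multigraph edges with endpoint map `ends`. -/
def edgeGraph {V E : Type*} (ends : E → Sym2 V) (A : Finset E) : SimpleGraph V :=
  SimpleGraph.fromEdgeSet (ends '' (A : Set E))

/-- Edge `e` has both endpoints in `S`. -/
def endsIn {V E : Type*} (ends : E → Sym2 V) (S : Finset V) (e : E) : Prop :=
  ∃ a b, ends e = s(a, b) ∧ a ∈ S ∧ b ∈ S

/-- Edge `e` crosses the cut `S` (one endpoint in `S`, the other outside). -/
def crossesCut {V E : Type*} (ends : E → Sym2 V) (S : Finset V) (e : E) : Prop :=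
  ∃ a b, ends e = s(a, b) ∧ a ∈ S ∧ b ∉ S

instance {V E : Type*} [Fintype V] [DecidableEq V] (ends : E → Sym2 V) (S : Finset V) :
    DecidablePred (endsIn ends S) := fun _ => by unfold endsIn; infer_instance

instance {V E : Type*} [Fintype V] [DecidableEq V] (ends : E → Sym2 V) (S : Finset V) :
    DecidablePred (crossesCut ends S) := fun _ => by unfold crossesCut; infer_instance

/-- The volume of a vertex set `S`: the sum over `v ∈ S` of the number of edges incident
to `v`. -/
def volG {V E : Type*} [Fintype V] [DecidableEq V] [DecidableEq E]
    (ends : E → Sym2 V) (ground : Finset E) (S : Finset V) : ℕ :=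
  ∑ v ∈ S, (ground.filter fun e => ∃ a b, ends e = s(a, b) ∧ (a = v ∨ b = v)).card

lemma edgeGraph_adj {V E : Type*} (ends : E → Sym2 V) (A : Finset E) {x y : V} :
    (edgeGraph ends A).Adj x y ↔ x ≠ y ∧ ∃ e ∈ A, ends e = s(x, y) := by
  constructor
  · intro h
    rw [edgeGraph, SimpleGraph.fromEdgeSet_adj] at h
    obtain ⟨⟨e, he, hee⟩, hne⟩ := h
    exact ⟨hne, e, he, hee⟩
  · rintro ⟨hne, e, he, hee⟩
    rw [edgeGraph, SimpleGraph.fromEdgeSet_adj]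
    exact ⟨⟨e, he, hee⟩, hne⟩

lemma edgeGraph_mono {V E : Type*} (ends : E → Sym2 V) {A B : Finset E} (h : A ⊆ B) :
    edgeGraph ends A ≤ edgeGraph ends B :=
  SimpleGraph.fromEdgeSet_mono (Set.image_mono h)

lemma walk_mem_of_endsIn {V E : Type*} [DecidableEq V] (ends : E → Sym2 V) {A : Finset E}
    {S : Finset V} (hA : ∀ e ∈ A, endsIn ends S e) :
    ∀ {x u : V}, (edgeGraph ends A).Walk x u → x ∈ S → u ∈ S := by
  intro x u w
  induction w with
  | nil => exact id
  | @cons a b c h p ih =>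
    intro ha
    apply ih
    rw [edgeGraph_adj] at h
    obtain ⟨hne, e, he, hee⟩ := h
    obtain ⟨p1, p2, hpq, h1, h2⟩ := hA e he
    rw [hpq, Sym2.eq_iff] at hee
    rcases hee with ⟨rfl, rfl⟩ | ⟨rfl, rfl⟩
    · exact h2
    · exact h1

lemma exists_boundary {V : Type*} {H : SimpleGraph V} {P : V → Prop} :
    ∀ {a u : V}, H.Walk a u → P a → ¬ P u → ∃ x y, H.Adj x y ∧ P x ∧ ¬ P y := by
  classical
  intro a u w
  induction w with
  | nil => intro h h'; exact absurd h h'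
  | @cons a b c h p ih =>
    intro ha hu
    by_cases hb : P b
    · exact ih hb hu
    · exact ⟨a, b, h, ha, hb⟩

lemma endsIn_not_cross {V E : Type*} {ends : E → Sym2 V} {S : Finset V} {e : E}
    (h : endsIn ends S e) : ¬ crossesCut ends S e := by
  rintro ⟨a, b, he, ha, hb⟩
  obtain ⟨c, d, he', hc, hd⟩ := h
  rw [he] at he'
  rw [Sym2.eq_iff] at he'
  rcases he' with ⟨rfl, rfl⟩ | ⟨rfl, rfl⟩
  · exact hb hd
  · exact hb hc

/-- Correctness of colored BFS for local cuts: if `T` is a spanning tree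
of the component of `v`, `S ∋ v` has volume at most `ν`, boundary at most `λmax`, induces
a connected subgraph, and at most `2β` tree edges cross `S`, then there is a blue edge set
(containing all tree edges inside `S`, no tree edge crossing `S`) and a green edge set of at
most `2β−1` non-tree edges inside `S` (no boundary edge of `S` is green) such that `S` is
exactly the connected component of `v` in the subgraph of blue tree edges and green
non-tree edges. -/
theorem colored_bfs_finds_local_cut
    {V E : Type*} [Fintype V] [DecidableEq V] [Fintype E] [DecidableEq E]
    (ends : E → Sym2 V) (ground T : Finset E) (v : V) (S : Finset V)
    (ν lammax beta : ℕ)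
    (hTsub : T ⊆ ground)
    (hTforest : (∀ e ∈ T, ¬ (ends e).IsDiag) ∧ Set.InjOn ends (T : Set E) ∧
      (edgeGraph ends T).IsAcyclic)
    (hTspan : ∀ u : V, (edgeGraph ends ground).Reachable v u →
      (edgeGraph ends T).Reachable v u)
    (hvS : v ∈ S)
    (hvol : volG ends ground S ≤ ν)
    (hbnd : (ground.filter (crossesCut ends S)).card ≤ lammax)
    (hSconn : ∀ u ∈ S, ∀ w ∈ S,
      (edgeGraph ends (ground.filter (endsIn ends S))).Reachable u w)
    (hTcross : (T.filter (crossesCut ends S)).card ≤ 2 * beta) :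
    ∃ Blue Green : Finset E,
      (∀ e ∈ T, crossesCut ends S e → e ∉ Blue) ∧
      (∀ e ∈ T, endsIn ends S e → e ∈ Blue) ∧
      Green ⊆ (ground.filter (endsIn ends S)) \ T ∧
      Green.card ≤ 2 * beta - 1 ∧
      (∀ e ∈ ground, crossesCut ends S e → e ∉ Green) ∧
      {u : V | (edgeGraph ends ((T ∩ Blue) ∪ (Green \ T))).Reachable v u} = ↑S := by
  classical
  set inn := ground.filter (endsIn ends S) with hinndef
  set Blue := T.filter (endsIn ends S) with hBluedef
  have hBlueT : Blue ⊆ T := filter_subset _ _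
  have hBlueIn : ∀ e ∈ Blue, endsIn ends S e := fun e he => (mem_filter.mp he).2
  have hInnIn : ∀ e ∈ inn, endsIn ends S e := fun e he => (mem_filter.mp he).2
  set cRep : V → Finset V :=
    fun u => S.filter (fun w => (edgeGraph ends Blue).Reachable u w) with hcRep
  have cRep_mem : ∀ x y : V, y ∈ cRep x ↔ y ∈ S ∧ (edgeGraph ends Blue).Reachable x y := by
    intro x y; rw [hcRep]; exact mem_filter
  have cRep_self : ∀ x ∈ S, x ∈ cRep x :=
    fun x hx => (cRep_mem x x).mpr ⟨hx, SimpleGraph.Reachable.refl x⟩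
  have cRep_subS : ∀ x, cRep x ⊆ S := fun x y hy => ((cRep_mem x y).mp hy).1
  have cRep_eq : ∀ x y : V, (edgeGraph ends Blue).Reachable x y → cRep x = cRep y := by
    intro x y hxy
    ext w
    rw [cRep_mem, cRep_mem]
    constructor <;> rintro ⟨hw, hr⟩
    · exact ⟨hw, hxy.symm.trans hr⟩
    · exact ⟨hw, hxy.trans hr⟩
  have cRep_eq' : ∀ x y : V, y ∈ cRep x → cRep x = cRep y :=
    fun x y hy => cRep_eq x y ((cRep_mem x y).mp hy).2
  -- every vertex of S is reachable from v in the tree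
  have hS_tree_reach : ∀ u ∈ S, (edgeGraph ends T).Reachable v u := fun u hu =>
    hTspan u (SimpleGraph.Reachable.mono
      (edgeGraph_mono ends (filter_subset _ _)) (hSconn v hvS u hu))
  -- bound on the number of blue components
  have hcomp_bound : 2 ≤ (S.image cRep).card →
      (S.image cRep).card ≤ (T.filter (crossesCut ends S)).card := by
    intro h2
    have hex : ∀ C ∈ S.image cRep, ∃ e ∈ T.filter (crossesCut ends S),
        ∃ a b, ends e = s(a, b) ∧ a ∈ C ∧ b ∉ S := by
      intro C hC
      obtain ⟨x, hx, rfl⟩ := mem_image.mp hC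
      obtain ⟨C', hC', hne⟩ := exists_mem_ne h2 (cRep x)
      obtain ⟨x', hx', rfl⟩ := mem_image.mp hC'
      have hx'notin : x' ∉ cRep x := fun hmem => hne (cRep_eq' x x' hmem).symm
      obtain ⟨w⟩ := (hS_tree_reach x hx).symm.trans (hS_tree_reach x' hx')
      obtain ⟨a, b, hadj, haC, hbC⟩ :=
        exists_boundary (P := fun z => z ∈ cRep x) w (cRep_self x hx) hx'notin
      rw [edgeGraph_adj] at hadj
      obtain ⟨hab, e, heT, hee⟩ := hadj
      have haS : a ∈ S := cRep_subS x haC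
      have hbS : b ∉ S := by
        intro hbS
        apply hbC
        have heB : e ∈ Blue := mem_filter.mpr ⟨heT, a, b, hee, haS, hbS⟩
        have hadjB : (edgeGraph ends Blue).Adj a b :=
          (edgeGraph_adj ends Blue).mpr ⟨hab, e, heB, hee⟩
        exact (cRep_mem x b).mpr ⟨hbS, ((cRep_mem x a).mp haC).2.trans hadjB.reachable⟩
      exact ⟨e, mem_filter.mpr ⟨heT, a, b, hee, haS, hbS⟩, a, b, hee, haC, hbS⟩
    -- surjection from crossing tree edges onto components
    set g : E → Finset V := fun e =>
      cRep (if h : ∃ a, a ∈ S ∧ ∃ b, b ∉ S ∧ ends e = s(a, b) then h.choose else v) with hg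
    apply Finset.card_le_card_of_surjOn g
    intro C hC
    obtain ⟨e, heF, a, b, hee, haC, hbS⟩ := hex C hC
    have haS : a ∈ S := by
      obtain ⟨x, hx, hCx⟩ := mem_image.mp hC
      exact cRep_subS x (hCx ▸ haC)
    refine ⟨e, heF, ?_⟩
    have hcond : ∃ a', a' ∈ S ∧ ∃ b', b' ∉ S ∧ ends e = s(a', b') :=
      ⟨a, haS, b, hbS, hee⟩
    rw [hg]
    simp only [dif_pos hcond]
    obtain ⟨ha'S, b', hb'S, hee'⟩ := hcond.choose_spec
    have : s(hcond.choose, b') = s(a, b) := hee' ▸ hee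
    rw [Sym2.eq_iff] at this
    have hchoose_eq : hcond.choose = a := by
      rcases this with ⟨h1, h2⟩ | ⟨h1, h2⟩
      · exact h1
      · exact absurd (h1 ▸ ha'S) hbS
    rw [hchoose_eq]
    obtain ⟨x, hx, hCx⟩ := mem_image.mp hC
    rw [← hCx]
    exact (cRep_eq' x a (hCx ▸ haC)).symm
  -- the main inductive construction of Green
  have key : ∀ n : ℕ, ∀ Green : Finset E, Green ⊆ inn \ T →
      Green.card + 1 ≤
        (((S.filter (fun u => (edgeGraph ends (Blue ∪ Green)).Reachable v u))).image cRep).card →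
      (S \ S.filter (fun u => (edgeGraph ends (Blue ∪ Green)).Reachable v u)).card ≤ n →
      ∃ Green' : Finset E, Green' ⊆ inn \ T ∧
        Green'.card + 1 ≤
          ((S.filter (fun u => (edgeGraph ends (Blue ∪ Green')).Reachable v u)).image cRep).card ∧
        S.filter (fun u => (edgeGraph ends (Blue ∪ Green')).Reachable v u) = S := by
    intro n
    induction n with
    | zero =>
      intro Green hG hInv hCard
      refine ⟨Green, hG, hInv, ?_⟩
      have : S \ S.filter (fun u => (edgeGraph ends (Blue ∪ Green)).Reachable v u) = ∅ :=
        card_eq_zero.mp (Nat.le_zero.mp hCard)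
      have hsub := sdiff_eq_empty_iff_subset.mp this
      exact Subset.antisymm (filter_subset _ _) hsub
    | succ n ih =>
      intro Green hG hInv hCard
      set R := S.filter (fun u => (edgeGraph ends (Blue ∪ Green)).Reachable v u) with hR
      by_cases hRS : R = S
      · exact ⟨Green, hG, hInv, hRS⟩
      · -- find a new green edge
        have hRsubS : R ⊆ S := filter_subset _ _
        obtain ⟨u, huS, huR⟩ : ∃ u ∈ S, u ∉ R := by
          by_contra h
          push_neg at h
          exact hRS (Subset.antisymm hRsubS h)
        have hunr : ¬ (edgeGraph ends (Blue ∪ Green)).Reachable v u := by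
          intro h; exact huR (mem_filter.mpr ⟨huS, h⟩)
        obtain ⟨w⟩ := hSconn v hvS u huS
        obtain ⟨x, y, hadj, hx, hy⟩ :=
          exists_boundary (P := fun z => (edgeGraph ends (Blue ∪ Green)).Reachable v z) w
            (SimpleGraph.Reachable.refl v) hunr
        rw [edgeGraph_adj] at hadj
        obtain ⟨hxy, e, heI, hee⟩ := hadj
        obtain ⟨a, b, heab, haS, hbS⟩ := hInnIn e heI
        have hxS : x ∈ S := by
          rw [heab, Sym2.eq_iff] at hee
          rcases hee with ⟨rfl, rfl⟩ | ⟨rfl, rfl⟩ <;> first | exact haS | exact hbS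
        have hyS : y ∈ S := by
          have h2 : s(a, b) = s(x, y) := heab.symm.trans hee
          rw [Sym2.eq_iff] at h2
          rcases h2 with ⟨rfl, rfl⟩ | ⟨rfl, rfl⟩ <;> first | exact hbS | exact haS
        have heBG : e ∉ Blue ∪ Green := by
          intro hmem
          exact hy (hx.trans ((edgeGraph_adj ends (Blue ∪ Green)).mpr
            ⟨hxy, e, hmem, hee⟩).reachable)
        have heT : e ∉ T := by
          intro heT
          exact heBG (mem_union_left _ (mem_filter.mpr ⟨heT, a, b, heab, haS, hbS⟩))
        have heG : e ∉ Green := fun h => heBG (mem_union_right _ h)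
        set Green' := insert e Green with hGreen'
        have hG' : Green' ⊆ inn \ T :=
          insert_subset (mem_sdiff.mpr ⟨heI, heT⟩) hG
        set R' := S.filter (fun u => (edgeGraph ends (Blue ∪ Green')).Reachable v u) with hR'
        have hsubBG : Blue ∪ Green ⊆ Blue ∪ Green' :=
          union_subset_union_right (subset_insert e Green)
        have hmono := edgeGraph_mono ends hsubBG
        have hRR' : R ⊆ R' := by
          intro z hz
          obtain ⟨hzS, hzr⟩ := mem_filter.mp hz
          exact mem_filter.mpr ⟨hzS, hzr.mono hmono⟩
        have hyR' : y ∈ R' := by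
          refine mem_filter.mpr ⟨hyS, ?_⟩
          refine (hx.mono hmono).trans ?_
          exact ((edgeGraph_adj ends (Blue ∪ Green')).mpr
            ⟨hxy, e, mem_union_right _ (mem_insert_self e Green), hee⟩).reachable
        have hyR : y ∉ R := fun h => hy (mem_filter.mp h).2
        have hcy_notin : cRep y ∉ R.image cRep := by
          intro hmem
          obtain ⟨z, hzR, hz⟩ := mem_image.mp hmem
          have : y ∈ cRep z := hz ▸ cRep_self y hyS
          have hreach : (edgeGraph ends Blue).Reachable z y := ((cRep_mem z y).mp this).2
          exact hy (((mem_filter.mp hzR).2).trans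
            (hreach.mono (edgeGraph_mono ends subset_union_left)))
        have himg_sub : insert (cRep y) (R.image cRep) ⊆ R'.image cRep := by
          intro C hC
          rcases mem_insert.mp hC with rfl | hC
          · exact mem_image.mpr ⟨y, hyR', rfl⟩
          · obtain ⟨z, hzR, hz⟩ := mem_image.mp hC
            exact mem_image.mpr ⟨z, hRR' hzR, hz⟩
        have hInv' : Green'.card + 1 ≤ (R'.image cRep).card := by
          have h1 : Green'.card = Green.card + 1 := card_insert_of_notMem heG
          have h2 : (insert (cRep y) (R.image cRep)).card = (R.image cRep).card + 1 :=
            card_insert_of_notMem hcy_notin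
          have h3 := card_le_card himg_sub
          omega
        have hCard' : (S \ R').card ≤ n := by
          have hlt : (S \ R').card < (S \ R).card := by
            apply card_lt_card
            constructor
            · exact sdiff_subset_sdiff (Subset.refl S) hRR'
            · intro hsub
              have hmem : y ∈ S \ R' := hsub (mem_sdiff.mpr ⟨hyS, hyR⟩)
              exact (mem_sdiff.mp hmem).2 hyR'
          omega
        exact ih Green' hG' hInv' hCard'
  -- initial invariant for Green = ∅
  have hinit : (∅ : Finset E).card + 1 ≤
      ((S.filter (fun u => (edgeGraph ends (Blue ∪ ∅)).Reachable v u)).image cRep).card := by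
    have hv : v ∈ S.filter (fun u => (edgeGraph ends (Blue ∪ ∅)).Reachable v u) :=
      mem_filter.mpr ⟨hvS, SimpleGraph.Reachable.refl v⟩
    have : cRep v ∈ (S.filter (fun u => (edgeGraph ends (Blue ∪ ∅)).Reachable v u)).image cRep :=
      mem_image.mpr ⟨v, hv, rfl⟩
    have := card_pos.mpr ⟨cRep v, this⟩
    simpa using this
  obtain ⟨Green, hGsub, hGinv, hGall⟩ := key
    (S \ S.filter (fun u => (edgeGraph ends (Blue ∪ ∅)).Reachable v u)).card ∅
    (empty_subset _) hinit le_rfl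
  have hGT : ∀ e ∈ Green, e ∉ T := fun e he => (mem_sdiff.mp (hGsub he)).2
  have hGinn : ∀ e ∈ Green, e ∈ inn := fun e he => (mem_sdiff.mp (hGsub he)).1
  -- the final edge set equals Blue ∪ Green
  have hset : (T ∩ Blue) ∪ (Green \ T) = Blue ∪ Green := by
    have h1 : T ∩ Blue = Blue := inter_eq_right.mpr hBlueT
    have h2 : Green \ T = Green := sdiff_eq_self_of_disjoint
      (disjoint_left.mpr hGT)
    rw [h1, h2]
  refine ⟨Blue, Green, ?_, ?_, hGsub, ?_, ?_, ?_⟩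
  · intro e heT hcross hBlue
    exact endsIn_not_cross (hBlueIn e hBlue) hcross
  · intro e heT hin
    exact mem_filter.mpr ⟨heT, hin⟩
  · -- cardinality bound
    rcases Nat.eq_zero_or_pos Green.card with h0 | hpos
    · omega
    · have h2 : 2 ≤ (S.image cRep).card := by
        have := hGall ▸ hGinv
        omega
      have := hcomp_bound h2
      have hfin : Green.card + 1 ≤ (S.image cRep).card := hGall ▸ hGinv
      omega
  · intro e heg hcross hmem
    exact endsIn_not_cross (hInnIn e (hGinn e hmem)) hcross
  · rw [hset]
    ext u
    simp only [Set.mem_setOf_eq, coe_mem, mem_coe]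
    constructor
    · intro h
      obtain ⟨w⟩ := h
      refine walk_mem_of_endsIn ends ?_ w hvS
      intro e he
      rcases mem_union.mp he with h | h
      · exact hBlueIn e h
      · exact hInnIn e (hGinn e h)
    · intro hu
      have hu' : u ∈ S.filter (fun z => (edgeGraph ends (Blue ∪ Green)).Reachable v z) := by
        rw [hGall]; exact hu
      exact (mem_filter.mp hu').2
end

section
/- Mirror-cluster volume bound: let C_j be a cluster of a pre-cluster decomposition contained in a φ-expander, and let S ⊆ C_j be a proper cut of G with ∂S = Λ. Then in the mirror cluster G/(V∖C_j) (the graph with all vertices outside C_j contracted to one node), there exists a cut of cut-size exactly ∂S and volume at most 3Λ/φ. -/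
open Finset

/-- The number of edges of the multigraph `(ends, ground)` with one endpoint in `A`
and the other in `B` (for disjoint `A`, `B`). -/
def xw {V E : Type*} [Fintype V] [DecidableEq V] [DecidableEq E]
    (ends : E → Sym2 V) (ground : Finset E) (A B : Finset V) : ℕ :=
  (ground.filter fun e => ∃ a b, ends e = s(a, b) ∧ a ∈ A ∧ b ∈ B).card

/-- The boundary size `∂S` of a vertex set `S`. -/
def bnd {V E : Type*} [Fintype V] [DecidableEq V] [DecidableEq E]
    (ends : E → Sym2 V) (ground : Finset E) (S : Finset V) : ℕ :=
  xw ends ground S (univ \ S)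

/-- Endpoint map of the mirror cluster `G/(V∖Cj)`: vertices outside `Cj` are contracted
to the extra vertex `none`. -/
def mirrorEnds {V E : Type*} [DecidableEq V] (ends : E → Sym2 V) (Cj : Finset V)
    (e : E) : Sym2 (Option V) :=
  (ends e).map fun x => if x ∈ Cj then some x else none

/-- Edge set of the mirror cluster: edges with at least one endpoint in `Cj`
(self-loops at the contracted vertex are discarded). -/
def mirrorGround {V E : Type*} [Fintype V] [DecidableEq V] [DecidableEq E]
    (ends : E → Sym2 V) (ground : Finset E) (Cj : Finset V) : Finset E :=
  ground.filter fun e => ∃ a b, ends e = s(a, b) ∧ (a ∈ Cj ∨ b ∈ Cj)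

lemma sym2_eq_mk {α : Type*} (z : Sym2 α) : ∃ a b, z = s(a,b) :=
  Sym2.ind (fun x y => ⟨x, y, rfl⟩) z

lemma sym2_exists_iff {α : Type*} (P : α → α → Prop) (a b : α) :
    (∃ x y, s(a,b) = s(x,y) ∧ P x y) ↔ P a b ∨ P b a := by
  constructor
  · rintro ⟨x, y, h, hxy⟩
    rw [Sym2.eq_iff] at h
    rcases h with ⟨rfl, rfl⟩ | ⟨rfl, rfl⟩
    · exact Or.inl hxy
    · exact Or.inr hxy
  · rintro (h | h)
    · exact ⟨a, b, rfl, h⟩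
    · exact ⟨b, a, Sym2.eq_swap, h⟩

section main
variable {V E : Type*} [Fintype V] [DecidableEq V] [DecidableEq E]
  (ends : E → Sym2 V) (ground : Finset E) (Cj : Finset V)

def mf (Cj : Finset V) (x : V) : Option V := if x ∈ Cj then some x else none

lemma mirrorEnds_eq (e : E) (a b : V) (hab : ends e = s(a,b)) :
    mirrorEnds ends Cj e = s(mf Cj a, mf Cj b) := by
  rw [mirrorEnds, hab, Sym2.map_pair_eq]; rfl

lemma bnd_mirror (S : Finset V) (X : Finset (Option V)) (hSCj : S ⊆ Cj)
    (hX : ∀ a : V, (mf Cj a ∈ X ↔ a ∈ S)) :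
    bnd (mirrorEnds ends Cj) (mirrorGround ends ground Cj) X = bnd ends ground S := by
  unfold bnd xw mirrorGround
  rw [filter_filter]
  congr 1
  apply filter_congr
  intro e _
  obtain ⟨a, b, hab⟩ := sym2_eq_mk (ends e)
  rw [hab, mirrorEnds_eq ends Cj e a b hab,
    sym2_exists_iff (fun x y => x ∈ Cj ∨ y ∈ Cj),
    sym2_exists_iff (fun x y => x ∈ X ∧ y ∈ univ \ X),
    sym2_exists_iff (fun x y => x ∈ S ∧ y ∈ univ \ S)]
  simp only [mem_sdiff, mem_univ, true_and, hX]
  constructor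
  · tauto
  · intro h
    refine ⟨?_, h⟩
    rcases h with ⟨h1, _⟩ | ⟨h1, _⟩
    · exact Or.inl (Or.inl (hSCj h1))
    · exact Or.inl (Or.inr (hSCj h1))

lemma bnd_mirror' (S : Finset V) (X : Finset (Option V)) (hSCj : S ⊆ Cj)
    (hX : ∀ a : V, (mf Cj a ∈ X ↔ a ∉ S)) :
    bnd (mirrorEnds ends Cj) (mirrorGround ends ground Cj) X = bnd ends ground S := by
  unfold bnd xw mirrorGround
  rw [filter_filter]
  congr 1
  apply filter_congr
  intro e _
  obtain ⟨a, b, hab⟩ := sym2_eq_mk (ends e)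
  rw [hab, mirrorEnds_eq ends Cj e a b hab,
    sym2_exists_iff (fun x y => x ∈ Cj ∨ y ∈ Cj),
    sym2_exists_iff (fun x y => x ∈ X ∧ y ∈ univ \ X),
    sym2_exists_iff (fun x y => x ∈ S ∧ y ∈ univ \ S)]
  simp only [mem_sdiff, mem_univ, true_and, hX, not_not]
  constructor
  · tauto
  · intro h
    refine ⟨?_, by tauto⟩
    rcases h with ⟨h1, _⟩ | ⟨h1, _⟩
    · exact Or.inl (Or.inl (hSCj h1))
    · exact Or.inl (Or.inr (hSCj h1))

lemma deg_mirror (v : V) (hv : v ∈ Cj) :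
    ((mirrorGround ends ground Cj).filter fun e =>
      ∃ x y, mirrorEnds ends Cj e = s(x,y) ∧ (x = some v ∨ y = some v)) =
    ground.filter (fun e => ∃ a b, ends e = s(a,b) ∧ (a = v ∨ b = v)) := by
  unfold mirrorGround
  rw [filter_filter]
  apply filter_congr
  intro e _
  obtain ⟨a, b, hab⟩ := sym2_eq_mk (ends e)
  have hf : ∀ a : V, mf Cj a = some v ↔ a = v := by
    intro a
    unfold mf
    split_ifs with h
    · simp
    · simp only [reduceCtorEq, false_iff]
      rintro rfl; exact h hv
  rw [hab, mirrorEnds_eq ends Cj e a b hab,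
    sym2_exists_iff (fun x y => x ∈ Cj ∨ y ∈ Cj),
    sym2_exists_iff (fun x y => x = some v ∨ y = some v),
    sym2_exists_iff (fun x y => x = v ∨ y = v)]
  simp only [hf]
  constructor
  · tauto
  · intro h
    have h' : a = v ∨ b = v := by tauto
    refine ⟨?_, by tauto⟩
    rcases h' with rfl | rfl
    · exact Or.inl (Or.inl hv)
    · exact Or.inl (Or.inr hv)

lemma volG_mirror_image (T : Finset V) (hT : T ⊆ Cj) :
    volG (mirrorEnds ends Cj) (mirrorGround ends ground Cj) (T.image some) =
      volG ends ground T := by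
  unfold volG
  rw [Finset.sum_image (fun a _ b _ h => Option.some_injective V h)]
  apply Finset.sum_congr rfl
  intro v hv
  rw [deg_mirror ends ground Cj v (hT hv)]

lemma card_le_volG (T : Finset V) (F : Finset E) (hF : F ⊆ ground)
    (h : ∀ e ∈ F, ∃ a b, ends e = s(a,b) ∧ (a ∈ T ∨ b ∈ T)) :
    F.card ≤ volG ends ground T := by
  calc F.card ≤ (T.biUnion fun v => ground.filter fun e =>
      ∃ a b, ends e = s(a,b) ∧ (a = v ∨ b = v)).card := by
        apply card_le_card
        intro e he
        obtain ⟨a, b, hab, hor⟩ := h e he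
        rcases hor with ha | hb
        · exact mem_biUnion.2 ⟨a, ha, mem_filter.2 ⟨hF he, a, b, hab, Or.inl rfl⟩⟩
        · exact mem_biUnion.2 ⟨b, hb, mem_filter.2 ⟨hF he, a, b, hab, Or.inr rfl⟩⟩
    _ ≤ ∑ v ∈ T, (ground.filter fun e => ∃ a b, ends e = s(a,b) ∧ (a = v ∨ b = v)).card :=
        card_biUnion_le
    _ = volG ends ground T := rfl

lemma deg_none_le (S : Finset V) (hSCj : S ⊆ Cj) :
    ((mirrorGround ends ground Cj).filter fun e =>
      ∃ x y, mirrorEnds ends Cj e = s(x,y) ∧ (x = (none : Option V) ∨ y = none)).card ≤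
      bnd ends ground S + volG ends ground (Cj \ S) := by
  set B1 := ground.filter (fun e => ∃ a b, ends e = s(a,b) ∧ a ∈ S ∧ b ∈ univ \ S) with hB1
  set B2 := ground.filter (fun e => ∃ a b, ends e = s(a,b) ∧ (a ∈ Cj \ S ∨ b ∈ Cj \ S)) with hB2
  have hsub : ((mirrorGround ends ground Cj).filter fun e =>
      ∃ x y, mirrorEnds ends Cj e = s(x,y) ∧ (x = (none : Option V) ∨ y = none)) ⊆ B1 ∪ B2 := by
    intro e he
    rw [mem_filter] at he
    obtain ⟨hmg, hinc⟩ := he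
    rw [mirrorGround, mem_filter] at hmg
    obtain ⟨heg, a', b', hab', hCj'⟩ := hmg
    obtain ⟨a, b, hab⟩ := sym2_eq_mk (ends e)
    rw [mirrorEnds_eq ends Cj e a b hab,
      sym2_exists_iff (fun x y => x = (none : Option V) ∨ y = none)] at hinc
    have hCjab : a ∈ Cj ∨ b ∈ Cj := by
      rw [hab] at hab'
      rw [Sym2.eq_iff] at hab'
      rcases hab' with ⟨rfl, rfl⟩ | ⟨rfl, rfl⟩ <;> tauto
    have hnone : a ∉ Cj ∨ b ∉ Cj := by
      have : mf Cj a = none ∨ mf Cj b = none := by tauto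
      unfold mf at this
      rcases this with h | h <;> [left; right] <;> intro hc <;> simp [hc] at h
    have key : ∀ x y : V, ends e = s(x,y) → x ∈ Cj → y ∉ Cj → e ∈ B1 ∪ B2 := by
      intro x y hxy hx hy
      by_cases hxS : x ∈ S
      · apply mem_union_left
        rw [hB1, mem_filter]
        exact ⟨heg, x, y, hxy, hxS, mem_sdiff.2 ⟨mem_univ _, fun hyS => hy (hSCj hyS)⟩⟩
      · apply mem_union_right
        rw [hB2, mem_filter]
        exact ⟨heg, x, y, hxy, Or.inl (mem_sdiff.2 ⟨hx, hxS⟩)⟩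
    rcases hCjab with ha | hb
    · have hbn : b ∉ Cj := by tauto
      exact key a b hab ha hbn
    · have han : a ∉ Cj := by tauto
      exact key b a (hab.trans Sym2.eq_swap) hb han
  calc _ ≤ (B1 ∪ B2).card := card_le_card hsub
    _ ≤ B1.card + B2.card := card_union_le _ _
    _ ≤ bnd ends ground S + volG ends ground (Cj \ S) := by
        apply Nat.add_le_add
        · exact le_of_eq rfl
        · apply card_le_volG ends ground (Cj \ S) B2 (filter_subset _ _)
          intro e he
          rw [hB2, mem_filter] at he
          exact he.2

end main

/-- Mirror-cluster volume bound: if `Cj` is a cluster contained in a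
`φ`-expander `C` (encoded as in the volume bound from expansion) and `S ⊆ Cj` is a proper
cut of `G` with `∂S = Λ`, then the mirror cluster `G/(V∖Cj)` contains a (proper) cut of
cut-size exactly `∂S = Λ` and volume at most `3Λ/φ`. -/
theorem mirror_cluster_local_cut
    {V E : Type*} [Fintype V] [DecidableEq V] [DecidableEq E]
    (ends : E → Sym2 V) (ground : Finset E) (C Cj S : Finset V)
    (φ Λ : ℝ) (hφ0 : 0 < φ) (hφ1 : φ ≤ 1)
    (volC : Finset V → ℝ)
    (hvolC : ∀ U : Finset V, U ⊆ C → (volG ends ground U : ℝ) ≤ volC U)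
    (hexp : ∀ U : Finset V, U ⊆ C → U.Nonempty → U ≠ C →
      φ * min (volC U) (volC (C \ U)) ≤ (xw ends ground U (C \ U) : ℝ))
    (hCj : Cj ⊆ C)
    (hS : S ⊆ Cj) (hSne : S.Nonempty) (hCS : (C \ S).Nonempty)
    (hprop : bnd ends ground S ≠ 0)
    (hΛ : (bnd ends ground S : ℝ) = Λ) :
    ∃ X : Finset (Option V), X.Nonempty ∧ X ≠ univ ∧
      ((bnd (mirrorEnds ends Cj) (mirrorGround ends ground Cj) X : ℝ) = Λ) ∧
      ((volG (mirrorEnds ends Cj) (mirrorGround ends ground Cj) X : ℝ) ≤ 3 * Λ / φ) := by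

  have hΛ0 : (0 : ℝ) ≤ Λ := hΛ ▸ Nat.cast_nonneg _
  have hSC : S ⊆ C := hS.trans hCj
  have hSneC : S ≠ C := by
    obtain ⟨x, hx⟩ := hCS
    rw [mem_sdiff] at hx
    intro h; exact hx.2 (h ▸ hx.1)
  have hxw_le : xw ends ground S (C \ S) ≤ bnd ends ground S := by
    apply card_le_card
    intro e he
    rw [mem_filter] at he ⊢
    obtain ⟨heg, a, b, hab, ha, hb⟩ := he
    exact ⟨heg, a, b, hab, ha, mem_sdiff.2 ⟨mem_univ _, (mem_sdiff.1 hb).2⟩⟩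
  have h1 : φ * min (volC S) (volC (C \ S)) ≤ Λ := by
    calc φ * min (volC S) (volC (C \ S)) ≤ (xw ends ground S (C \ S) : ℝ) :=
          hexp S hSC hSne hSneC
      _ ≤ (bnd ends ground S : ℝ) := Nat.cast_le.2 hxw_le
      _ = Λ := hΛ
  have hΛφ : Λ ≤ Λ / φ := by
    rw [le_div_iff₀ hφ0]
    nlinarith
  rcases le_or_gt (volC S) (volC (C \ S)) with hmin | hmin
  · -- small side is S : take X = some '' S
    have hvS : (volG ends ground S : ℝ) ≤ Λ / φ := by
      have h2 : volC S ≤ Λ / φ := by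
        rw [le_div_iff₀ hφ0]
        rw [min_eq_left hmin] at h1
        nlinarith
      exact (hvolC S hSC).trans h2
    refine ⟨S.image some, hSne.image some, ?_, ?_, ?_⟩
    · intro h
      have : (none : Option V) ∈ S.image some := h ▸ mem_univ _
      simp at this
    · rw [bnd_mirror ends ground Cj S _ hS ?_, hΛ]
      intro a
      unfold mf
      split_ifs with h
      · simp
      · simp only [mem_image, reduceCtorEq, and_false, exists_false, false_iff]
        intro hc; exact h (hS hc)
    · rw [volG_mirror_image ends ground Cj S hS]
      calc (volG ends ground S : ℝ) ≤ Λ / φ := hvS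
        _ ≤ 3 * Λ / φ := by gcongr; linarith
  · -- small side is C \ S : take X = some '' (Cj \ S) ∪ {none}
    have hvCS : (volG ends ground (Cj \ S) : ℝ) ≤ Λ / φ := by
      have h2 : volC (C \ S) ≤ Λ / φ := by
        rw [le_div_iff₀ hφ0]
        rw [min_eq_right hmin.le] at h1
        nlinarith
      have h3 : volG ends ground (Cj \ S) ≤ volG ends ground (C \ S) := by
        apply Finset.sum_le_sum_of_subset
        exact sdiff_subset_sdiff hCj le_rfl
      calc (volG ends ground (Cj \ S) : ℝ) ≤ (volG ends ground (C \ S) : ℝ) :=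
            Nat.cast_le.2 h3
        _ ≤ volC (C \ S) := hvolC _ sdiff_subset
        _ ≤ Λ / φ := h2
    set X : Finset (Option V) := (Cj \ S).image some ∪ {none} with hXdef
    have hnone_notin : (none : Option V) ∉ (Cj \ S).image some := by simp
    refine ⟨X, ⟨none, by simp [hXdef]⟩, ?_, ?_, ?_⟩
    · obtain ⟨s, hs⟩ := hSne
      intro h
      have : some s ∈ X := h ▸ mem_univ _
      rw [hXdef] at this
      simp only [mem_union, mem_image, mem_singleton, mem_sdiff, reduceCtorEq, or_false] at this
      obtain ⟨a, ⟨_, haS⟩, ha⟩ := this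
      exact haS (Option.some_injective V ha ▸ hs)
    · rw [bnd_mirror' ends ground Cj S X hS ?_, hΛ]
      intro a
      unfold mf
      rw [hXdef]
      split_ifs with h
      · simp only [mem_union, mem_image, mem_singleton, mem_sdiff, reduceCtorEq, or_false]
        constructor
        · rintro ⟨b, ⟨_, hbS⟩, hb⟩
          exact fun haS => hbS (Option.some_injective V hb ▸ haS)
        · intro haS; exact ⟨a, ⟨h, haS⟩, rfl⟩
      · simp only [mem_union, mem_singleton, or_true, true_iff]
        intro hc; exact h (hS hc)
    · have hdisj : Disjoint ((Cj \ S).image some) ({(none : Option V)}) := by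
        simp [disjoint_singleton_right, hnone_notin]
      have hvol : volG (mirrorEnds ends Cj) (mirrorGround ends ground Cj) X =
          volG (mirrorEnds ends Cj) (mirrorGround ends ground Cj) ((Cj \ S).image some) +
          volG (mirrorEnds ends Cj) (mirrorGround ends ground Cj) {(none : Option V)} := by
        rw [hXdef]
        exact Finset.sum_union hdisj
      have hv1 : volG (mirrorEnds ends Cj) (mirrorGround ends ground Cj) ((Cj \ S).image some)
          = volG ends ground (Cj \ S) :=
        volG_mirror_image ends ground Cj (Cj \ S) sdiff_subset
      have hv2 : volG (mirrorEnds ends Cj) (mirrorGround ends ground Cj) {(none : Option V)}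
          ≤ bnd ends ground S + volG ends ground (Cj \ S) := by
        rw [volG, Finset.sum_singleton]
        exact deg_none_le ends ground Cj S hS
      have hfinal : (volG (mirrorEnds ends Cj) (mirrorGround ends ground Cj) X : ℝ) ≤
          (volG ends ground (Cj \ S) : ℝ) + (Λ + (volG ends ground (Cj \ S) : ℝ)) := by
        rw [hvol, hv1]
        push_cast
        have : ((volG (mirrorEnds ends Cj) (mirrorGround ends ground Cj) {(none : Option V)} : ℕ) : ℝ) ≤ ((bnd ends ground S + volG ends ground (Cj \ S) : ℕ) : ℝ) := Nat.cast_le.2 hv2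
        push_cast at this
        rw [hΛ] at this
        linarith
      have h3 : (3:ℝ) * Λ / φ = Λ / φ + (Λ / φ + Λ / φ) := by ring
      rw [h3]
      linarith
end

section
/- Boundary decrease under boundary-sparse splits: if a cluster C' with minimum proper cut value at least λ_min is split along a cut D with w(D, C'∖D) ≤ 0.4·λ_max and λ_max ≤ 1.2·λ_min, then ∂D ≤ ∂C' − 0.04·λ_min and ∂(C'∖D) ≤ ∂C' − 0.04·λ_min. -/
open Finset

lemma xw_comm {V E : Type*} [Fintype V] [DecidableEq V] [DecidableEq E]
    (ends : E → Sym2 V) (ground : Finset E) (A B : Finset V) :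
    xw ends ground A B = xw ends ground B A := by
  unfold xw
  congr 1
  apply filter_congr
  intro e _
  constructor <;> rintro ⟨a, b, h, ha, hb⟩ <;>
    exact ⟨b, a, by rw [h, Sym2.eq_swap], hb, ha⟩

lemma xw_union_right {V E : Type*} [Fintype V] [DecidableEq V] [DecidableEq E]
    (ends : E → Sym2 V) (ground : Finset E) (A B1 B2 : Finset V)
    (h12 : Disjoint B1 B2) (hA1 : Disjoint A B1) (hA2 : Disjoint A B2) :
    xw ends ground A (B1 ∪ B2) = xw ends ground A B1 + xw ends ground A B2 := by
  unfold xw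
  rw [← Finset.card_union_of_disjoint, ← filter_or]
  · apply congrArg
    apply filter_congr
    intro e _
    constructor
    · rintro ⟨a, b, h, ha, hb⟩
      rcases mem_union.1 hb with hb | hb
      · exact Or.inl ⟨a, b, h, ha, hb⟩
      · exact Or.inr ⟨a, b, h, ha, hb⟩
    · rintro (⟨a, b, h, ha, hb⟩ | ⟨a, b, h, ha, hb⟩) <;>
        exact ⟨a, b, h, ha, by simp [hb]⟩
  · rw [Finset.disjoint_left]
    rintro e he1 he2
    rw [mem_filter] at he1 he2
    obtain ⟨-, a, b, h, ha, hb⟩ := he1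
    obtain ⟨-, a', b', h', ha', hb'⟩ := he2
    rw [h, Sym2.eq_iff] at h'
    rcases h' with ⟨rfl, rfl⟩ | ⟨rfl, rfl⟩
    · exact Finset.disjoint_left.1 h12 hb hb'
    · exact Finset.disjoint_left.1 hA1 ha' hb

/-- Boundary decrease under boundary-sparse splits: if every proper cut
of the graph has size at least `λmin`, `λmax ≤ 1.2·λmin`, and a cluster `C'` is split along
a cut `D ⊆ C'` with `w(D, C'∖D) ≤ 0.4·λmax` (both `D` and `C'∖D` being proper cuts), then
`∂D ≤ ∂C' − 0.04·λmin` and `∂(C'∖D) ≤ ∂C' − 0.04·λmin`. -/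
theorem boundary_decrease_small_internal_cut
    {V E : Type*} [Fintype V] [DecidableEq V] [DecidableEq E]
    (ends : E → Sym2 V) (ground : Finset E) (C' D : Finset V)
    (lammin lammax : ℝ) (hlam0 : 0 ≤ lammin) (hlam : lammax ≤ 1.2 * lammin)
    (hD : D ⊆ C')
    (hmin : ∀ U : Finset V, bnd ends ground U ≠ 0 → lammin ≤ (bnd ends ground U : ℝ))
    (hDprop : bnd ends ground D ≠ 0)
    (hCDprop : bnd ends ground (C' \ D) ≠ 0)
    (hsmall : (xw ends ground D (C' \ D) : ℝ) ≤ 0.4 * lammax) :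
    (bnd ends ground D : ℝ) ≤ (bnd ends ground C' : ℝ) - 0.04 * lammin ∧
    (bnd ends ground (C' \ D) : ℝ) ≤ (bnd ends ground C' : ℝ) - 0.04 * lammin := by
  classical
  have hdisjCD : Disjoint D (C' \ D) := disjoint_sdiff
  have hdisjDout : Disjoint D (univ \ C') :=
    Finset.disjoint_left.2 fun v hv hv' => (mem_sdiff.1 hv').2 (hD hv)
  have hdisjCDout : Disjoint (C' \ D) (univ \ C') :=
    Finset.disjoint_left.2 fun v hv hv' => (mem_sdiff.1 hv').2 (mem_sdiff.1 hv).1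
  have hUD : univ \ D = (C' \ D) ∪ (univ \ C') := by
    ext v
    simp only [mem_sdiff, mem_union, mem_univ, true_and]
    have hDC : v ∈ D → v ∈ C' := fun h => hD h
    tauto
  have hUCD : univ \ (C' \ D) = D ∪ (univ \ C') := by
    ext v
    simp only [mem_sdiff, mem_union, mem_univ, true_and]
    have hDC : v ∈ D → v ∈ C' := fun h => hD h
    tauto
  have hC' : D ∪ (C' \ D) = C' := Finset.union_sdiff_of_subset hD
  have h1 : bnd ends ground D
      = xw ends ground D (C' \ D) + xw ends ground D (univ \ C') := by
    rw [bnd, hUD, xw_union_right ends ground _ _ _ hdisjCDout hdisjCD hdisjDout]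
  have h2 : bnd ends ground (C' \ D)
      = xw ends ground D (C' \ D) + xw ends ground (C' \ D) (univ \ C') := by
    rw [bnd, hUCD,
      xw_union_right ends ground _ _ _ hdisjDout hdisjCD.symm hdisjCDout,
      xw_comm ends ground _ D]
  have h3 : bnd ends ground C'
      = xw ends ground D (univ \ C') + xw ends ground (C' \ D) (univ \ C') := by
    have hsplit := xw_union_right ends ground (univ \ C') D (C' \ D)
      hdisjCD hdisjDout.symm hdisjCDout.symm
    rw [hC'] at hsplit
    rw [bnd, xw_comm, hsplit, xw_comm ends ground _ D, xw_comm ends ground _ (C' \ D)]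
  have hminD := hmin D hDprop
  have hminCD := hmin (C' \ D) hCDprop
  rw [h1] at hminD
  rw [h2] at hminCD
  rw [h1, h2, h3]
  push_cast at hminD hminCD ⊢
  constructor <;> linarith
end

section
/- Boundary decrease under δ-sparse balanced splits: if a cluster C' is split along a (1−δ)-boundary-sparse cut D with w(D, C'∖D) ≥ 0.4·λ_max, then ∂D ≤ ∂C' − 0.4·δ·λ_max and ∂(C'∖D) ≤ ∂C' − 0.4·δ·λ_max. -/
open Finset

lemma xw_union {V E : Type*} [Fintype V] [DecidableEq V] [DecidableEq E]
    (ends : E → Sym2 V) (ground : Finset E) (A B1 B2 : Finset V)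
    (hAB2 : Disjoint A B2) (hB : Disjoint B1 B2) :
    xw ends ground A (B1 ∪ B2) = xw ends ground A B1 + xw ends ground A B2 := by
  unfold xw
  rw [← Finset.card_union_of_disjoint, ← Finset.filter_or]
  · congr 1
    apply Finset.filter_congr
    intro e _
    constructor
    · rintro ⟨a, b, h, ha, hb⟩
      rcases Finset.mem_union.mp hb with hb | hb
      · exact Or.inl ⟨a, b, h, ha, hb⟩
      · exact Or.inr ⟨a, b, h, ha, hb⟩
    · rintro (⟨a, b, h, ha, hb⟩ | ⟨a, b, h, ha, hb⟩)
      · exact ⟨a, b, h, ha, Finset.mem_union.mpr (Or.inl hb)⟩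
      · exact ⟨a, b, h, ha, Finset.mem_union.mpr (Or.inr hb)⟩
  · rw [Finset.disjoint_filter]
    rintro e _ ⟨a, b, h, ha, hb⟩ ⟨a', b', h', ha', hb'⟩
    rw [h, Sym2.eq_iff] at h'
    rcases h' with ⟨rfl, rfl⟩ | ⟨rfl, rfl⟩
    · exact Finset.disjoint_left.mp hB hb hb'
    · exact Finset.disjoint_left.mp hAB2 ha hb'

/-- Boundary decrease under δ-sparse balanced splits: if a cluster `C'`
is split along a `(1−δ)`-boundary-sparse cut `D ⊆ C'` with `w(D, C'∖D) ≥ 0.4·λmax`, then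
`∂D ≤ ∂C' − 0.4·δ·λmax` and `∂(C'∖D) ≤ ∂C' − 0.4·δ·λmax`. -/
theorem boundary_decrease_sparse_balanced_cut
    {V E : Type*} [Fintype V] [DecidableEq V] [DecidableEq E]
    (ends : E → Sym2 V) (ground : Finset E) (C' D : Finset V)
    (δ lammax : ℝ) (hδ0 : 0 ≤ δ) (hδ1 : δ < 1) (hlam : 0 ≤ lammax)
    (hD : D ⊆ C')
    (hsparse : (xw ends ground D (C' \ D) : ℝ) <
      (1 - δ) * min ((xw ends ground D (univ \ C') : ℝ))
        ((xw ends ground (C' \ D) (univ \ C') : ℝ)))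
    (hbig : 0.4 * lammax ≤ (xw ends ground D (C' \ D) : ℝ)) :
    (bnd ends ground D : ℝ) ≤ (bnd ends ground C' : ℝ) - 0.4 * δ * lammax ∧
    (bnd ends ground (C' \ D) : ℝ) ≤ (bnd ends ground C' : ℝ) - 0.4 * δ * lammax := by
  have hd1 : Disjoint D (univ \ C') := by
    rw [Finset.disjoint_left]; intro x hx hx'
    exact (Finset.mem_sdiff.mp hx').2 (hD hx)
  have hd2 : Disjoint (C' \ D) (univ \ C') := by
    rw [Finset.disjoint_left]; intro x hx hx'
    exact (Finset.mem_sdiff.mp hx').2 (Finset.mem_sdiff.mp hx).1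
  have hd3 : Disjoint D (C' \ D) := Finset.disjoint_sdiff
  have s1 : univ \ D = (C' \ D) ∪ (univ \ C') := by
    ext x
    simp only [Finset.mem_sdiff, Finset.mem_union, Finset.mem_univ, true_and]
    constructor
    · intro hx
      by_cases h : x ∈ C'
      · exact Or.inl ⟨h, hx⟩
      · exact Or.inr h
    · rintro (⟨_, h⟩ | h) hxD
      · exact h hxD
      · exact h (hD hxD)
  have s2 : univ \ (C' \ D) = D ∪ (univ \ C') := by
    ext x
    simp only [Finset.mem_sdiff, Finset.mem_union, Finset.mem_univ, true_and]
    constructor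
    · intro hx
      by_cases h : x ∈ C'
      · exact Or.inl (by by_contra h'; exact hx ⟨h, h'⟩)
      · exact Or.inr h
    · rintro (h | h) ⟨hxC, hxD⟩
      · exact hxD h
      · exact h hxC
  have s3 : C' = D ∪ (C' \ D) := by
    rw [Finset.union_sdiff_of_subset hD]
  have e1 : bnd ends ground D = xw ends ground D (C' \ D) + xw ends ground D (univ \ C') := by
    rw [bnd, s1, xw_union ends ground D (C' \ D) (univ \ C') hd1 hd2]
  have e2 : bnd ends ground (C' \ D) =
      xw ends ground D (C' \ D) + xw ends ground (C' \ D) (univ \ C') := by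
    rw [bnd, s2, xw_union ends ground (C' \ D) D (univ \ C') hd2 hd1,
      xw_comm ends ground (C' \ D) D]
  have e3 : bnd ends ground C' =
      xw ends ground D (univ \ C') + xw ends ground (C' \ D) (univ \ C') := by
    have h := xw_union ends ground (univ \ C') D (C' \ D) hd2.symm hd3
    rw [← s3] at h
    rw [bnd, xw_comm, h, xw_comm ends ground (univ \ C') D,
      xw_comm ends ground (univ \ C') (C' \ D)]
  set x : ℝ := (xw ends ground D (C' \ D) : ℝ)
  set p : ℝ := (xw ends ground D (univ \ C') : ℝ)
  set q : ℝ := (xw ends ground (C' \ D) (univ \ C') : ℝ)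
  have hp0 : (0 : ℝ) ≤ p := Nat.cast_nonneg _
  have hq0 : (0 : ℝ) ≤ q := Nat.cast_nonneg _
  have hxp : x < (1 - δ) * p :=
    lt_of_lt_of_le hsparse (mul_le_mul_of_nonneg_left (min_le_left _ _) (by linarith))
  have hxq : x < (1 - δ) * q :=
    lt_of_lt_of_le hsparse (mul_le_mul_of_nonneg_left (min_le_right _ _) (by linarith))
  have hE1 : (bnd ends ground D : ℝ) = x + p := by rw [e1]; push_cast; ring
  have hE2 : (bnd ends ground (C' \ D) : ℝ) = x + q := by rw [e2]; push_cast; ring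
  have hE3 : (bnd ends ground C' : ℝ) = p + q := by rw [e3]; push_cast; ring
  rw [hE1, hE2, hE3]
  constructor
  · nlinarith [mul_nonneg hδ0 hq0, mul_le_mul_of_nonneg_left hbig hδ0]
  · nlinarith [mul_nonneg hδ0 hp0, mul_le_mul_of_nonneg_left hbig hδ0]
end

section
/- Boundary-sparse cuts of a cluster have large external attachment: if S ⊊ C is (1−δ)-boundary sparse in C with 0 ≤ δ < 1, and every proper cut of the graph has size at least λ_min, then w(S, V∖C) ≥ λ_min/2. -/
open Finset

lemma xw_union_disjoint {V E : Type*} [Fintype V] [DecidableEq V] [DecidableEq E]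
    (ends : E → Sym2 V) (ground : Finset E) (S B₁ B₂ : Finset V)
    (hSB₁ : Disjoint S B₁) (hSB₂ : Disjoint S B₂) (hB : Disjoint B₁ B₂) :
    xw ends ground S (B₁ ∪ B₂) = xw ends ground S B₁ + xw ends ground S B₂ := by
  unfold xw
  have hset : ground.filter (fun e => ∃ a b, ends e = s(a, b) ∧ a ∈ S ∧ b ∈ B₁ ∪ B₂)
      = ground.filter (fun e => ∃ a b, ends e = s(a, b) ∧ a ∈ S ∧ b ∈ B₁)
        ∪ ground.filter (fun e => ∃ a b, ends e = s(a, b) ∧ a ∈ S ∧ b ∈ B₂) := by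
    ext e
    simp only [mem_filter, mem_union]
    constructor
    · rintro ⟨he, a, b, hab, haS, hb | hb⟩
      · exact Or.inl ⟨he, a, b, hab, haS, hb⟩
      · exact Or.inr ⟨he, a, b, hab, haS, hb⟩
    · rintro (⟨he, a, b, hab, haS, hb⟩ | ⟨he, a, b, hab, haS, hb⟩)
      · exact ⟨he, a, b, hab, haS, Or.inl hb⟩
      · exact ⟨he, a, b, hab, haS, Or.inr hb⟩
  rw [hset, card_union_of_disjoint]
  rw [Finset.disjoint_left]
  intro e he1 he2
  simp only [mem_filter] at he1 he2
  obtain ⟨-, a, b, hab, haS, hb1⟩ := he1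
  obtain ⟨-, a', b', hab', haS', hb2⟩ := he2
  rw [hab, Sym2.eq_iff] at hab'
  rcases hab' with ⟨rfl, rfl⟩ | ⟨h1, h2⟩
  · exact Finset.disjoint_left.mp hB hb1 hb2
  · subst h1; subst h2
    exact Finset.disjoint_left.mp hSB₁ haS' hb1

/-- Boundary-sparse cuts of a cluster have large external attachment:
if `S ⊊ C` is `(1−δ)`-boundary sparse in `C` with `0 ≤ δ < 1`, and every proper cut of
the graph has size at least `λmin`, then `w(S, V∖C) ≥ λmin/2`. -/
theorem boundary_sparse_large_external
    {V E : Type*} [Fintype V] [DecidableEq V] [DecidableEq E]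
    (ends : E → Sym2 V) (ground : Finset E) (C S : Finset V) (δ lammin : ℝ)
    (hδ0 : 0 ≤ δ) (hδ1 : δ < 1)
    (hS : S ⊆ C) (hSC : S ≠ C)
    (hmin : ∀ U : Finset V, bnd ends ground U ≠ 0 → lammin ≤ (bnd ends ground U : ℝ))
    (hsparse : (xw ends ground S (C \ S) : ℝ) <
      (1 - δ) * min ((xw ends ground S (univ \ C) : ℝ))
        ((xw ends ground (C \ S) (univ \ C) : ℝ))) :
    lammin / 2 ≤ (xw ends ground S (univ \ C) : ℝ) := by
  have hU : (univ \ S : Finset V) = (C \ S) ∪ (univ \ C) := by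
    ext v
    simp only [mem_sdiff, mem_union, mem_univ, true_and]
    constructor
    · intro hv
      by_cases h : v ∈ C
      · exact Or.inl ⟨h, hv⟩
      · exact Or.inr h
    · rintro (⟨-, h⟩ | h)
      · exact h
      · exact fun hs => h (hS hs)
  have hsplit : bnd ends ground S
      = xw ends ground S (C \ S) + xw ends ground S (univ \ C) := by
    rw [bnd, hU]
    exact xw_union_disjoint _ _ _ _ _ Finset.disjoint_sdiff
      (Finset.disjoint_sdiff.mono_left hS)
      (Finset.disjoint_sdiff.mono_left (Finset.sdiff_subset))
  set a := (xw ends ground S (C \ S) : ℝ) with ha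
  set b := (xw ends ground S (univ \ C) : ℝ) with hb
  set c := (xw ends ground (C \ S) (univ \ C) : ℝ) with hc
  have ha0 : 0 ≤ a := Nat.cast_nonneg _
  have hb0 : 0 ≤ b := Nat.cast_nonneg _
  have hminbc : min b c ≤ b := min_le_left _ _
  have hbndS : (bnd ends ground S : ℝ) = a + b := by rw [hsplit]; push_cast; ring
  have hne : bnd ends ground S ≠ 0 := by
    intro h
    have : a + b = 0 := by rw [← hbndS, h]; norm_num
    nlinarith [hsparse, hminbc, ha0, hb0]
  have hlam : lammin ≤ a + b := by rw [← hbndS]; exact hmin S hne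
  by_contra hcon
  push_neg at hcon
  nlinarith [hsparse, hminbc, ha0, hb0, mul_nonneg (by linarith : (0:ℝ) ≤ 1 - δ) (by linarith [min_le_left b c] : (0:ℝ) ≤ b - min b c)]
end
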